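/- Define S on the Foissy Hopf algebra H_F as the algebra antihomomorphism (S(F_1F_2) = S(F_2)S(F_1) for ordered forests) determined on planar rooted trees by S(T) = −Σ_{all cuts c of T} (−1)^{|c|} \overline{P^c(T)}·R^c(T), where \overline{F} denotes the reverse of the ordered forest F and the empty cut contributes −T. Then S satisfies the antipode identity: for every planar rooted tree T, S(T) + T + Σ_{nonempty admissible cuts c of T} S(P^c(T))·R^c(T) = 0, i.e., μ∘(S⊗id)∘Δ(T) = 0. -/

import Mathlib

/-! ### Planar rooted trees -/

/-- A planar rooted tree: a root with an ordered list of branches.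
`PTree.node [T₁,…,T_k]` is `B₊(T₁⋯T_k)`; `PTree.node []` is the one-vertex tree `•`. -/
inductive PTree : Type where
  | node : List PTree → PTree

instance : Inhabited PTree := ⟨.node []⟩

noncomputable instance : DecidableEq PTree := Classical.decEq _

/-! ### Cuts -/

/-- A decoration of (the edges of) a tree by Booleans: `true` means the edge
belongs to the cut. `Cut.node [(b₁,c₁),…,(b_k,c_k)]` matches a tree
`PTree.node [t₁,…,t_k]`, with `bᵢ` decorating the edge from the root to `tᵢ`
and `cᵢ` a cut of `tᵢ`. -/
inductive Cut : Type where
  | node : List (Bool × Cut) → Cut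

namespace Cut

mutual
/-- The number of edges in a cut. -/
def size : Cut → ℕ
  | .node l => sizeList l
/-- The number of edges in a list of decorated edges. -/
def sizeList : List (Bool × Cut) → ℕ
  | [] => 0
  | (b, c) :: cs => (if b then 1 else 0) + size c + sizeList cs
end

mutual
/-- The cut containing no edges. -/
def isEmpty : Cut → Bool
  | .node l => isEmptyList l
/-- Whether a list of decorated edges contains no cut edge. -/
def isEmptyList : List (Bool × Cut) → Bool
  | [] => true
  | (b, c) :: cs => !b && isEmpty c && isEmptyList cs
end

mutual
/-- A cut is admissible if every path from the root to a leaf meets it at most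
once, i.e. below a cut edge there is no further cut edge. -/
def admissible : Cut → Bool
  | .node l => admissibleList l
/-- Admissibility for a list of decorated edges. -/
def admissibleList : List (Bool × Cut) → Bool
  | [] => true
  | (b, c) :: cs => (if b then isEmpty c else admissible c) && admissibleList cs
end

end Cut

namespace PTree

mutual
/-- All cuts (edge subsets) of a planar rooted tree. -/
def cutsOf : PTree → List Cut
  | .node l => (cutsOfList l).map Cut.node
/-- All decorations of a forest. -/
def cutsOfList : List PTree → List (List (Bool × Cut))
  | [] => [[]]
  | t :: ts =>
      (cutsOf t).flatMap (fun c =>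
        (cutsOfList ts).flatMap (fun cs => [(true, c) :: cs, (false, c) :: cs]))
end

mutual
/-- `cutPieces t c = (R^c(t), P^c(t))`: the root component of `t` after removing
the edges of `c`, together with the ordered forest of the remaining components
(in planar depth-first order). -/
def cutPieces : PTree → Cut → PTree × List PTree
  | .node l, .node cs =>
      ((PTree.node (cutPiecesList l cs).1 : PTree), (cutPiecesList l cs).2)
/-- `cutPieces` for forests. -/
def cutPiecesList : List PTree → List (Bool × Cut) → List PTree × List PTree
  | [], _ => ([], [])
  | _ :: _, [] => ([], [])
  | t :: ts, (b, c) :: cs =>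
      let p := cutPieces t c
      let q := cutPiecesList ts cs
      if b then (q.1, (p.1 :: p.2) ++ q.2) else (p.1 :: q.1, p.2 ++ q.2)
end

/-- `R^c(T)`, the component containing the root. -/
def Rcut (t : PTree) (c : Cut) : PTree := (cutPieces t c).1

/-- `P^c(T)`, the ordered forest of components not containing the root. -/
def Pcut (t : PTree) (c : Cut) : List PTree := (cutPieces t c).2

end PTree

/-! ### The Foissy Hopf algebra -/

/-- The Foissy Hopf algebra over `k`: the tensor algebra on the span of planar
rooted trees, with monomial basis the ordered forests (words) of planar trees. -/
abbrev HF (k : Type*) [CommSemiring k] := MonoidAlgebra k (FreeMonoid PTree)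

/-- The model for `H_F ⊗ H_F`. -/
abbrev HF2 (k : Type*) [CommSemiring k] :=
  MonoidAlgebra k (FreeMonoid PTree × FreeMonoid PTree)

/-- `B₊` on `H_F`: sends an ordered forest to the tree obtained by attaching a
new root, extended linearly. -/
noncomputable def BplusF (k : Type*) [CommSemiring k] : HF k → HF k :=
  MonoidAlgebra.mapDomain (fun F => FreeMonoid.of (PTree.node (FreeMonoid.toList F)))

/-- The tensor product map `H_F × H_F → H_F ⊗ H_F` in the pair model. -/
noncomputable def tensHF (k : Type*) [CommSemiring k] (f g : HF k) : HF2 k :=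
  f.coeff.sum (fun a x => g.coeff.sum (fun b y => MonoidAlgebra.single (a, b) (x * y)))

/-- The map `S` on planar rooted trees:
`S(T) = −Σ_{all cuts c of T} (−1)^{|c|} overline{P^c(T)}·R^c(T)`, where
`overline{F}` is the reverse of the ordered forest `F` (the sum being over all
cuts; the empty cut contributes `−T`). -/
noncomputable def fS (k : Type*) [CommRing k] (T : PTree) : HF k :=
  - (((PTree.cutsOf T).map (fun c =>
      ((-1 : k) ^ (Cut.size c)) •
        MonoidAlgebra.single
          (FreeMonoid.ofList ((PTree.Pcut T c).reverse ++ [PTree.Rcut T c])) (1 : k))).sum)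

/-- Antimultiplicative extension of `S` to ordered forests:
`S(F₁F₂) = S(F₂)S(F₁)`. -/
noncomputable def fSForest (k : Type*) [CommRing k] (F : List PTree) : HF k :=
  (F.reverse.map (fS k)).prod

/-! In `H_F^op ⊗ H_F` compare `A(T) = Σ_{c admissible} S(P^c) ⊗ R^c` with
`B(T) = Σ_{all c} (-1)^{|c|} overline{P^c} ⊗ R^c`. Multiplying the two factors turns them into
`μ∘(S ⊗ id)∘(Δ T - T ⊗ 1)` and `-S(T)`, so it suffices to show `A(T) = B(T)`.

With the opposite product on the left factor, `S(P₁P₂) ⊗ R₁R₂ = (S(P₁) ⊗ R₁)(S(P₂) ⊗ R₂)`, so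
for `T = B₊(t₁⋯tₙ)` both sums are `B₊` (on the right factor) applied to
`Π_i (S(tᵢ) ⊗ 1 + X(tᵢ))`, `X = A, B`: the edge above `tᵢ` is either kept, contributing
`X(tᵢ)`, or cut. In `A` a cut edge forces the empty cut below it, which gives `S(tᵢ) ⊗ 1`; in `B`
it gives `-Σ_c (-1)^{|c|} overline{P^c(tᵢ)} R^c(tᵢ) ⊗ 1`, which is `S(tᵢ) ⊗ 1` by the very
formula defining `S`. Induction on `T` concludes. -/

theorem List.sum_map_flatMap {α β M : Type*} [AddCommMonoid M] (l : List α) (g : α → List β)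
    (f : β → M) : ((l.flatMap g).map f).sum = (l.map fun a => ((g a).map f).sum).sum := by
  induction l with
  | nil => rfl
  | cons a l ih => simp [ih]

theorem List.sum_map_filter_eq_sum_map_ite {α M : Type*} [AddCommMonoid M] (p : α → Bool)
    (l : List α) (f : α → M) :
    ((l.filter p).map f).sum = (l.map fun a => if p a then f a else 0).sum := by
  induction l with
  | nil => rfl
  | cons a l ih => by_cases h : p a <;> simp [h, ih]

theorem List.sum_map_neg {α M : Type*} [AddCommGroup M] (l : List α) (f : α → M) :
    (l.map fun a => -f a).sum = -(l.map f).sum := by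
  induction l with
  | nil => simp
  | cons a l ih => simp [ih, add_comm]

namespace Cut

mutual
theorem admissible_of_isEmpty : ∀ c : Cut, c.isEmpty = true → c.admissible = true
  | .node l, h => admissibleList_of_isEmptyList l h
theorem admissibleList_of_isEmptyList :
    ∀ l : List (Bool × Cut), isEmptyList l = true → admissibleList l = true
  | [], _ => rfl
  | (b, c) :: cs, h => by
      simp only [isEmptyList, Bool.and_eq_true, Bool.not_eq_true'] at h
      obtain ⟨⟨rfl, hc⟩, hcs⟩ := h
      simp [admissibleList, admissible_of_isEmpty c hc, admissibleList_of_isEmptyList cs hcs]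
end

end Cut

namespace PTree

theorem sum_cutsOfList_cons {M : Type*} [AddCommMonoid M] (t : PTree) (ts : List PTree)
    (f : List (Bool × Cut) → M) :
    ((cutsOfList (t :: ts)).map f).sum
      = ((cutsOf t).map fun c =>
          ((cutsOfList ts).map fun cs => f ((true, c) :: cs) + f ((false, c) :: cs)).sum).sum := by
  simp only [cutsOfList, List.sum_map_flatMap, List.map_cons, List.map_nil, List.sum_cons,
    List.sum_nil, add_zero]

theorem cutPiecesList_cons_true (t : PTree) (ts : List PTree) (c : Cut)
    (cs : List (Bool × Cut)) :
    cutPiecesList (t :: ts) ((true, c) :: cs)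
      = ((cutPiecesList ts cs).1, (Rcut t c :: Pcut t c) ++ (cutPiecesList ts cs).2) := by
  simp [cutPiecesList, Rcut, Pcut]

theorem cutPiecesList_cons_false (t : PTree) (ts : List PTree) (c : Cut)
    (cs : List (Bool × Cut)) :
    cutPiecesList (t :: ts) ((false, c) :: cs)
      = (Rcut t c :: (cutPiecesList ts cs).1, Pcut t c ++ (cutPiecesList ts cs).2) := by
  simp [cutPiecesList, Rcut, Pcut]

mutual
def emptyCut : PTree → Cut
  | .node l => .node (emptyCutList l)
def emptyCutList : List PTree → List (Bool × Cut)
  | [] => []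
  | t :: ts => (false, emptyCut t) :: emptyCutList ts
end

mutual
theorem cutPieces_emptyCut : ∀ t : PTree, cutPieces t (emptyCut t) = (t, [])
  | .node l => by rw [emptyCut, cutPieces, cutPiecesList_emptyCutList l]
theorem cutPiecesList_emptyCutList : ∀ l : List PTree, cutPiecesList l (emptyCutList l) = (l, [])
  | [] => by rw [emptyCutList, cutPiecesList]
  | t :: ts => by
      rw [emptyCutList, cutPiecesList, cutPieces_emptyCut t, cutPiecesList_emptyCutList ts]
      rfl
end

theorem Rcut_emptyCut (t : PTree) : Rcut t (emptyCut t) = t := by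
  rw [Rcut, cutPieces_emptyCut]

theorem Pcut_emptyCut (t : PTree) : Pcut t (emptyCut t) = [] := by
  rw [Pcut, cutPieces_emptyCut]

mutual
theorem sum_cutsOf_ite_isEmpty {M : Type*} [AddCommMonoid M] :
    ∀ (t : PTree) (F : Cut → M),
      ((cutsOf t).map fun c => if c.isEmpty then F c else 0).sum = F (emptyCut t)
  | .node l, F => by
      rw [cutsOf, List.map_map, emptyCut]
      exact sum_cutsOfList_ite_isEmptyList l fun cs => F (.node cs)
theorem sum_cutsOfList_ite_isEmptyList {M : Type*} [AddCommMonoid M] :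
    ∀ (l : List PTree) (F : List (Bool × Cut) → M),
      ((cutsOfList l).map fun cs => if Cut.isEmptyList cs then F cs else 0).sum
        = F (emptyCutList l)
  | [], F => by simp [cutsOfList, Cut.isEmptyList, emptyCutList]
  | t :: ts, F => by
      have inner (c : Cut) :
          ((cutsOfList ts).map fun cs =>
            (if Cut.isEmptyList ((true, c) :: cs) then F ((true, c) :: cs) else 0)
              + if Cut.isEmptyList ((false, c) :: cs) then F ((false, c) :: cs) else 0).sum
          = if c.isEmpty then
              ((cutsOfList ts).map fun cs =>
                if Cut.isEmptyList cs then F ((false, c) :: cs) else 0).sum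
            else 0 := by
        cases hc : c.isEmpty <;> simp [Cut.isEmptyList, hc]
      simp only [sum_cutsOfList_cons, inner]
      rw [sum_cutsOf_ite_isEmpty t, sum_cutsOfList_ite_isEmptyList ts, emptyCutList]
end

theorem sum_cutsOf_ite_admissible {M : Type*} [AddCommMonoid M] (t : PTree) (F : Cut → M) :
    (t.cutsOf.map fun c => if c.admissible then F c else 0).sum
      = F (emptyCut t) + ((t.cutsOf.filter fun c => c.admissible && !c.isEmpty).map F).sum := by
  rw [List.sum_map_filter_eq_sum_map_ite, ← sum_cutsOf_ite_isEmpty t F, ← List.sum_map_add]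
  congr 1
  refine List.map_congr_left fun c _ => ?_
  cases hc : c.isEmpty <;> simp [hc, Cut.admissible_of_isEmpty]

end PTree

open MonoidAlgebra MulOpposite

namespace HF

variable (k : Type*) [CommRing k]

abbrev OpTensor := MonoidAlgebra k ((FreeMonoid PTree)ᵐᵒᵖ × FreeMonoid PTree)

noncomputable def inlOp : HF k →ₗ[k] OpTensor k :=
  mapDomainLinearMap k k fun p => (op p, 1)

noncomputable def inr : HF k →+* OpTensor k :=
  mapDomainRingHom k (MonoidHom.inr _ _)

noncomputable def mulFactors : OpTensor k →ₗ[k] HF k :=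
  mapDomainLinearMap k k fun x => unop x.1 * x.2

noncomputable def bplusRight : OpTensor k →ₗ[k] OpTensor k :=
  mapDomainLinearMap k k fun x => (x.1, FreeMonoid.of (PTree.node (FreeMonoid.toList x.2)))

variable {k}

@[simp]
theorem inlOp_single (p : FreeMonoid PTree) (a : k) : inlOp k (single p a) = single (op p, 1) a :=
  mapDomainLinearMap_single ..

@[simp]
theorem inr_single (p : FreeMonoid PTree) (a : k) : inr k (single p a) = single (1, p) a := by
  simp [inr, mapDomain_single]

theorem inlOp_mul (f g : HF k) : inlOp k (f * g) = inlOp k g * inlOp k f := by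
  induction f using MonoidAlgebra.induction_linear with
  | zero => simp
  | add f₁ f₂ h₁ h₂ => simp [add_mul, mul_add, h₁, h₂]
  | single p a =>
    induction g using MonoidAlgebra.induction_linear with
    | zero => simp
    | add g₁ g₂ h₁ h₂ => simp [add_mul, mul_add, h₁, h₂]
    | single q b => simp [single_mul_single, mul_comm]

theorem commute_inlOp_inr (f g : HF k) : Commute (inlOp k f) (inr k g) := by
  induction f using MonoidAlgebra.induction_linear with
  | zero => simp
  | add f₁ f₂ h₁ h₂ => rw [map_add]; exact h₁.add_left h₂
  | single p a =>
    induction g using MonoidAlgebra.induction_linear with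
    | zero => simp
    | add g₁ g₂ h₁ h₂ => rw [map_add]; exact h₁.add_right h₂
    | single q b => simp [Commute, SemiconjBy, single_mul_single, mul_comm]

theorem mulFactors_inlOp_mul_inr (f g : HF k) : mulFactors k (inlOp k f * inr k g) = f * g := by
  induction f using MonoidAlgebra.induction_linear with
  | zero => simp
  | add f₁ f₂ h₁ h₂ => simp [add_mul, h₁, h₂]
  | single p a =>
    induction g using MonoidAlgebra.induction_linear with
    | zero => simp
    | add g₁ g₂ h₁ h₂ => simp only [map_add, mul_add, h₁, h₂]
    | single q b => simp [mulFactors, single_mul_single]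

theorem bplusRight_inlOp_mul_inr (f g : HF k) :
    bplusRight k (inlOp k f * inr k g) = inlOp k f * inr k (BplusF k g) := by
  induction f using MonoidAlgebra.induction_linear with
  | zero => simp
  | add f₁ f₂ h₁ h₂ => simp [add_mul, h₁, h₂]
  | single p a =>
    induction g using MonoidAlgebra.induction_linear with
    | zero => simp [BplusF, mapDomain_zero]
    | add g₁ g₂ h₁ h₂ => simp only [map_add, mul_add, h₁, h₂, BplusF, mapDomain_add]
    | single q b => simp [bplusRight, BplusF, mapDomain_single, single_mul_single]

theorem fSForest_append (l₁ l₂ : List PTree) :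
    fSForest k (l₁ ++ l₂) = fSForest k l₂ * fSForest k l₁ := by
  simp [fSForest]

theorem inlOp_fSForest_append (l₁ l₂ : List PTree) :
    inlOp k (fSForest k (l₁ ++ l₂))
      = inlOp k (fSForest k l₁) * inlOp k (fSForest k l₂) := by
  rw [fSForest_append, inlOp_mul]

theorem fSForest_nil : fSForest k [] = 1 := rfl

theorem fSForest_singleton (t : PTree) : fSForest k [t] = fS k t := by
  simp [fSForest]

open PTree

section

variable (k)

noncomputable def fSSummand (t : PTree) (c : Cut) : HF k :=
  (-1 : k) ^ c.size • single (FreeMonoid.ofList ((t.Pcut c).reverse ++ [t.Rcut c])) 1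

noncomputable def cutTerm (t : PTree) (c : Cut) : OpTensor k :=
  inlOp k (fSForest k (t.Pcut c)) * inr k (single (FreeMonoid.of (t.Rcut c)) 1)

noncomputable def cutTermList (l : List PTree) (cs : List (Bool × Cut)) : OpTensor k :=
  inlOp k (fSForest k (cutPiecesList l cs).2)
    * inr k (single (FreeMonoid.ofList (cutPiecesList l cs).1) 1)

noncomputable def signedCutTerm (t : PTree) (c : Cut) : OpTensor k :=
  single (op (FreeMonoid.ofList (t.Pcut c).reverse), FreeMonoid.of (t.Rcut c)) ((-1) ^ c.size)

noncomputable def signedCutTermList (l : List PTree) (cs : List (Bool × Cut)) : OpTensor k :=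
  single (op (FreeMonoid.ofList (cutPiecesList l cs).2.reverse),
    FreeMonoid.ofList (cutPiecesList l cs).1) ((-1) ^ Cut.sizeList cs)

noncomputable def admissibleCutSum (t : PTree) : OpTensor k :=
  (t.cutsOf.map fun c => if c.admissible then cutTerm k t c else 0).sum

noncomputable def admissibleCutSumList (l : List PTree) : OpTensor k :=
  ((cutsOfList l).map fun cs => if Cut.admissibleList cs then cutTermList k l cs else 0).sum

noncomputable def signedCutSum (t : PTree) : OpTensor k :=
  (t.cutsOf.map (signedCutTerm k t)).sum

noncomputable def signedCutSumList (l : List PTree) : OpTensor k :=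
  ((cutsOfList l).map (signedCutTermList k l)).sum

end

theorem fS_eq_neg_sum (t : PTree) : fS k t = -(t.cutsOf.map (fSSummand k t)).sum := rfl

theorem cutTermList_cons_false (t : PTree) (ts : List PTree) (c : Cut)
    (cs : List (Bool × Cut)) :
    cutTermList k (t :: ts) ((false, c) :: cs) = cutTerm k t c * cutTermList k ts cs := by
  rw [cutTermList, cutPiecesList_cons_false, inlOp_fSForest_append, FreeMonoid.ofList_cons,
    ← mul_one (1 : k), ← single_mul_single, map_mul, cutTerm, cutTermList,
    (commute_inlOp_inr _ _).mul_mul_mul_comm]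

theorem cutTermList_cons_true_emptyCut (t : PTree) (ts : List PTree) (cs : List (Bool × Cut)) :
    cutTermList k (t :: ts) ((true, emptyCut t) :: cs)
      = inlOp k (fS k t) * cutTermList k ts cs := by
  rw [cutTermList, cutPiecesList_cons_true, Rcut_emptyCut, Pcut_emptyCut, inlOp_fSForest_append,
    fSForest_singleton, mul_assoc, cutTermList]

theorem signedCutTermList_cons_false (t : PTree) (ts : List PTree) (c : Cut)
    (cs : List (Bool × Cut)) :
    signedCutTermList k (t :: ts) ((false, c) :: cs)
      = signedCutTerm k t c * signedCutTermList k ts cs := by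
  simp [signedCutTermList, signedCutTerm, cutPiecesList_cons_false, single_mul_single,
    Cut.sizeList, pow_add]

theorem signedCutTermList_cons_true (t : PTree) (ts : List PTree) (c : Cut)
    (cs : List (Bool × Cut)) :
    signedCutTermList k (t :: ts) ((true, c) :: cs)
      = -inlOp k (fSSummand k t c)
        * signedCutTermList k ts cs := by
  simp [signedCutTermList, fSSummand, cutPiecesList_cons_true, single_mul_single, Cut.sizeList,
    pow_add]

theorem inlOp_fS (t : PTree) :
    inlOp k (fS k t) = -(t.cutsOf.map fun c => inlOp k (fSSummand k t c)).sum := by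
  rw [fS_eq_neg_sum, map_neg, map_list_sum, List.map_map]
  rfl

theorem signedCutSumList_cons (t : PTree) (ts : List PTree) :
    signedCutSumList k (t :: ts)
      = (inlOp k (fS k t) + signedCutSum k t) * signedCutSumList k ts := by
  have inner (c : Cut) :
      ((cutsOfList ts).map fun cs => signedCutTermList k (t :: ts) ((true, c) :: cs)
        + signedCutTermList k (t :: ts) ((false, c) :: cs)).sum
      = (-inlOp k (fSSummand k t c)
        + signedCutTerm k t c) * signedCutSumList k ts := by
    simp only [signedCutTermList_cons_true, signedCutTermList_cons_false, ← add_mul,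
      List.sum_map_mul_left, signedCutSumList]
  rw [signedCutSumList, sum_cutsOfList_cons]
  simp only [inner, List.sum_map_mul_right, List.sum_map_add, List.sum_map_neg, inlOp_fS,
    signedCutSum]

theorem admissibleCutSumList_cons (t : PTree) (ts : List PTree) :
    admissibleCutSumList k (t :: ts)
      = (inlOp k (fS k t) + admissibleCutSum k t) * admissibleCutSumList k ts := by
  have inner (c : Cut) :
      ((cutsOfList ts).map fun cs =>
        (if Cut.admissibleList ((true, c) :: cs) then
          cutTermList k (t :: ts) ((true, c) :: cs) else 0)
        + if Cut.admissibleList ((false, c) :: cs) then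
            cutTermList k (t :: ts) ((false, c) :: cs) else 0).sum
      = (if c.isEmpty then
          ((cutsOfList ts).map fun cs => if Cut.admissibleList cs then
            cutTermList k (t :: ts) ((true, c) :: cs) else 0).sum else 0)
        + (if c.admissible then cutTerm k t c else 0) * admissibleCutSumList k ts := by
    cases hc : c.isEmpty <;> cases ha : c.admissible <;>
      simp [Cut.admissibleList, hc, ha, cutTermList_cons_false, admissibleCutSumList,
        ← List.sum_map_mul_left, mul_ite]
  rw [admissibleCutSumList, sum_cutsOfList_cons]
  simp only [inner, List.sum_map_add, List.sum_map_mul_right, sum_cutsOf_ite_isEmpty,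
    cutTermList_cons_true_emptyCut]
  rw [add_mul, admissibleCutSum]
  congr 1
  rw [admissibleCutSumList, ← List.sum_map_mul_left]
  simp only [mul_ite, mul_zero]

theorem admissibleCutSum_node (l : List PTree) :
    admissibleCutSum k (.node l) = bplusRight k (admissibleCutSumList k l) := by
  rw [admissibleCutSum, admissibleCutSumList, cutsOf, map_list_sum, List.map_map, List.map_map]
  congr 1
  refine List.map_congr_left fun cs _ => ?_
  by_cases h : Cut.admissibleList cs
  · rw [Function.comp_apply, Function.comp_apply, Cut.admissible, if_pos h, if_pos h,
      cutTermList, bplusRight_inlOp_mul_inr, BplusF, mapDomain_single, FreeMonoid.toList_ofList]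
    rfl
  · simp [Cut.admissible, h]

theorem signedCutSum_node (l : List PTree) :
    signedCutSum k (.node l) = bplusRight k (signedCutSumList k l) := by
  rw [signedCutSum, signedCutSumList, cutsOf, map_list_sum, List.map_map, List.map_map]
  congr 1
  refine List.map_congr_left fun cs _ => ?_
  simp [signedCutTerm, signedCutTermList, bplusRight, Pcut, Rcut, cutPieces, Cut.size]

theorem cutTermList_nil : cutTermList k [] [] = 1 := by
  simp [cutTermList, cutPiecesList, fSForest, one_def, Prod.mk_one_one]

theorem signedCutTermList_nil : signedCutTermList k [] [] = 1 := by
  simp [signedCutTermList, cutPiecesList, Cut.sizeList, one_def, Prod.mk_one_one]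

mutual
theorem admissibleCutSum_eq_signedCutSum : ∀ t : PTree, admissibleCutSum k t = signedCutSum k t
  | .node l => by
    rw [admissibleCutSum_node, signedCutSum_node, admissibleCutSumList_eq_signedCutSumList l]
theorem admissibleCutSumList_eq_signedCutSumList :
    ∀ l : List PTree, admissibleCutSumList k l = signedCutSumList k l
  | [] => by
    simp [admissibleCutSumList, signedCutSumList, cutsOfList, Cut.admissibleList,
      cutTermList_nil, signedCutTermList_nil]
  | t :: ts => by
    rw [admissibleCutSumList_cons, signedCutSumList_cons, admissibleCutSum_eq_signedCutSum t,
      admissibleCutSumList_eq_signedCutSumList ts]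
end

theorem mulFactors_admissibleCutSum (t : PTree) :
    mulFactors k (admissibleCutSum k t)
      = (t.cutsOf.map fun c => if c.admissible then
          fSForest k (t.Pcut c) * single (FreeMonoid.of (t.Rcut c)) 1 else 0).sum := by
  rw [admissibleCutSum, map_list_sum, List.map_map]
  congr 1
  refine List.map_congr_left fun c _ => ?_
  by_cases h : c.admissible
  · rw [Function.comp_apply, if_pos h, if_pos h, cutTerm, mulFactors_inlOp_mul_inr]
  · simp [h]

theorem mulFactors_signedCutSum (t : PTree) : mulFactors k (signedCutSum k t) = -fS k t := by
  rw [signedCutSum, fS_eq_neg_sum, neg_neg, map_list_sum, List.map_map]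
  congr 1
  refine List.map_congr_left fun c _ => ?_
  simp [signedCutTerm, fSSummand, mulFactors, smul_single]

end HF

/-- The explicit cut formula
`S(T) = −Σ_{all cuts c} (−1)^{|c|} overline{P^c(T)}·R^c(T)` (with reversed
ordered forests) satisfies the antipode identity in the Foissy Hopf algebra:
for every planar rooted tree `T`,
`S(T) + T + Σ_{nonempty admissible cuts c} S(P^c(T))·R^c(T) = 0`,
i.e. `μ∘(S ⊗ id)∘Δ(T) = 0`. -/
theorem fS_antipode_identity (k : Type*) [Field k] [CharZero k] (T : PTree) :
    fS k T + MonoidAlgebra.single (FreeMonoid.of T) (1 : k)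
      + (((PTree.cutsOf T).filter
            (fun c => Cut.admissible c && !(Cut.isEmpty c))).map
          (fun c => fSForest k (PTree.Pcut T c)
            * MonoidAlgebra.single (FreeMonoid.of (PTree.Rcut T c)) (1 : k))).sum
      = 0 := by
  have key := congrArg (HF.mulFactors k) (HF.admissibleCutSum_eq_signedCutSum (k := k) T)
  rw [HF.mulFactors_admissibleCutSum, HF.mulFactors_signedCutSum,
    PTree.sum_cutsOf_ite_admissible, PTree.Pcut_emptyCut, PTree.Rcut_emptyCut, HF.fSForest_nil,
    one_mul] at key
  rw [add_assoc, key, add_neg_cancel]
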